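/- Let m ∈ ℤ^6_{>0} be sorted decreasingly with m_i < |m|/3 for all i. Then the number of 3-element subsets K ⊆ {1,...,6} with ∑_{i∈K} m_i ≥ 2|m|/3 is at most 4, and if it equals 4 then the collection of complements {1,...,6}\K is either {{4,5,6},{3,5,6},{2,5,6},{1,5,6}} or {{4,5,6},{3,5,6},{3,4,6},{3,4,5}}. -/

import Mathlib

/-! Call a 3-set `K` heavy if `3 ∑_K m ≥ 2|m|`. Since every `m_i < |m|/3`, two heavy sets
share at least two indices. A heavy set may be traded for any set of pointwise larger weights,
so `{0, 2, 4}` is not heavy (it would make `{0, 1, 3}` heavy), and hence every heavy triple lies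
in `{0, 1, 2, 3}` or contains `{0, 1}`. Since `{0, 2, 3}` and `{0, 1, 4}` are not both heavy, the
heavy triples lie in one of the two chains `012, 013, 023, 123` and `012, 013, 014, 015`. -/

open Finset

section Heavy

variable {ι : Type*} [Fintype ι]

def IsHeavy (m : ι → ℤ) (K : Finset ι) : Prop :=
  2 * ∑ i, m i ≤ 3 * ∑ i ∈ K, m i

variable {m : ι → ℤ} {K L : Finset ι}

lemma IsHeavy.of_sum_le (hK : IsHeavy m K) (hKL : ∑ i ∈ K, m i ≤ ∑ i ∈ L, m i) :
    IsHeavy m L := by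
  unfold IsHeavy at *
  linarith

lemma IsHeavy.one_lt_card_inter [DecidableEq ι] [Nonempty ι] (hm : ∀ i, 0 ≤ m i)
    (hlt : ∀ i, 3 * m i < ∑ j, m j) (hK : IsHeavy m K) (hL : IsHeavy m L) :
    1 < #(K ∩ L) := by
  by_contra! hle
  obtain ⟨i, hi⟩ := card_le_one_iff_subset_singleton.mp hle
  have h_inter : ∑ j ∈ K ∩ L, m j ≤ m i := by
    simpa using sum_le_sum_of_subset_of_nonneg hi fun j _ _ => hm j
  have h_union : ∑ j ∈ K ∪ L, m j ≤ ∑ j, m j := sum_le_univ_sum_of_nonneg hm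
  have h_split := sum_union_inter (s₁ := K) (s₂ := L) (f := m)
  unfold IsHeavy at hK hL
  linarith [hlt i]

end Heavy

lemma Finset.exists_lt_lt_eq_of_card_eq_three {α : Type*} [LinearOrder α] {K : Finset α}
    (hK : #K = 3) : ∃ a b c, a < b ∧ b < c ∧ K = {a, b, c} := by
  set f := K.orderEmbOfFin hK
  refine ⟨f 0, f 1, f 2, f.strictMono (by decide), f.strictMono (by decide), ?_⟩
  rw [← image_orderEmbOfFin_univ K hK]
  ext x
  simp only [mem_image, mem_univ, true_and, mem_insert, mem_singleton, Fin.exists_fin_succ,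
    Fin.exists_fin_zero, or_false]
  exact or_congr eq_comm (or_congr eq_comm eq_comm)

def triplesInFirstFour : Finset (Finset (Fin 6)) :=
  {{0, 1, 2}, {0, 1, 3}, {0, 2, 3}, {1, 2, 3}}

def triplesContainingFirstTwo : Finset (Finset (Fin 6)) :=
  {{0, 1, 2}, {0, 1, 3}, {0, 1, 4}, {0, 1, 5}}

section FinSix

variable {m : Fin 6 → ℤ} (hsorted : ∀ i j : Fin 6, i ≤ j → m j ≤ m i)
  (hpos : ∀ i, 0 < m i) (hlt : ∀ i, 3 * m i < ∑ i, m i)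

include hpos hlt in
lemma not_isHeavy_zero_two_three_and_zero_one_four :
    ¬ (IsHeavy m {0, 2, 3} ∧ IsHeavy m {0, 1, 4}) := fun ⟨h023, h014⟩ =>
  absurd (h023.one_lt_card_inter (fun i => (hpos i).le) hlt h014) (by decide)

include hsorted hpos hlt in
lemma not_isHeavy_zero_two_four : ¬ IsHeavy m {0, 2, 4} := by
  intro h024
  have h013 : IsHeavy m {0, 1, 3} := h024.of_sum_le <| by
    simpa [sum_insert] using add_le_add (hsorted 1 2 (by decide)) (hsorted 3 4 (by decide))
  exact absurd (h024.one_lt_card_inter (fun i => (hpos i).le) hlt h013) (by decide)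

include hsorted hpos hlt in
lemma mem_triplesInFirstFour_or_mem_triplesContainingFirstTwo {K : Finset (Fin 6)}
    (hK : #K = 3) (hheavy : IsHeavy m K) :
    K ∈ triplesInFirstFour ∨ K ∈ triplesContainingFirstTwo := by
  obtain ⟨a, b, c, hab, hbc, rfl⟩ := exists_lt_lt_eq_of_card_eq_three hK
  by_cases hsmall : b < 2 ∨ c < 4
  · have hlow : ∀ a b c : Fin 6, a < b → b < c → b < 2 ∨ c < 4 →
        {a, b, c} ∈ triplesInFirstFour ∨ {a, b, c} ∈ triplesContainingFirstTwo := by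
      decide
    exact hlow a b c hab hbc hsmall
  · simp only [not_or, not_lt] at hsmall
    refine absurd (hheavy.of_sum_le ?_) (not_isHeavy_zero_two_four hsorted hpos hlt)
    have habc : ∑ i ∈ {a, b, c}, m i = m a + (m b + m c) := by
      simp [sum_insert, hab.ne, hbc.ne, (hab.trans hbc).ne]
    have h024 : ∑ i ∈ ({0, 2, 4} : Finset (Fin 6)), m i = m 0 + (m 2 + m 4) := by
      simp [sum_insert]
    rw [habc, h024]
    linarith [hsorted 0 a (Fin.zero_le a), hsorted 2 b hsmall.1, hsorted 4 c hsmall.2]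

include hsorted hpos hlt in
lemma isHeavy_subset_triplesInFirstFour_or_triplesContainingFirstTwo :
    (∀ K, #K = 3 → IsHeavy m K → K ∈ triplesInFirstFour) ∨
      (∀ K, #K = 3 → IsHeavy m K → K ∈ triplesContainingFirstTwo) := by
  have hexcl := not_isHeavy_zero_two_three_and_zero_one_four hpos hlt
  by_cases h014 : IsHeavy m {0, 1, 4}
  · have h023 : ¬ IsHeavy m {0, 2, 3} := fun h023 => hexcl ⟨h023, h014⟩
    refine Or.inr fun K hK hheavy => ?_
    rcases mem_triplesInFirstFour_or_mem_triplesContainingFirstTwo hsorted hpos hlt hK hheavy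
      with hK | hK
    · simp only [triplesInFirstFour, mem_insert, mem_singleton] at hK
      obtain rfl | rfl | rfl | rfl := hK
      · decide
      · decide
      · exact absurd hheavy h023
      · exact absurd (hheavy.of_sum_le (by simpa [sum_insert] using hsorted 0 1 (by decide)))
          h023
    · exact hK
  · refine Or.inl fun K hK hheavy => ?_
    rcases mem_triplesInFirstFour_or_mem_triplesContainingFirstTwo hsorted hpos hlt hK hheavy
      with hK | hK
    · exact hK
    · simp only [triplesContainingFirstTwo, mem_insert, mem_singleton] at hK
      obtain rfl | rfl | rfl | rfl := hK
      · decide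
      · decide
      · exact absurd hheavy h014
      · exact absurd (hheavy.of_sum_le (by simpa [sum_insert] using hsorted 4 5 (by decide)))
          h014

end FinSix

theorem excluded_strata_at_most_four (m : Fin 6 → ℤ)
    (hpos : ∀ i, 0 < m i)
    (hsorted : ∀ i j : Fin 6, i ≤ j → m j ≤ m i)
    (hlt : ∀ i, 3 * m i < ∑ i, m i) :
    let T := Finset.univ.filter
        (fun K : Finset (Fin 6) => K.card = 3 ∧ 2 * ∑ i, m i ≤ 3 * ∑ i ∈ K, m i)
    T.card ≤ 4 ∧
    (T.card = 4 →
      T.image (fun K => Kᶜ)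
          = {({3, 4, 5} : Finset (Fin 6)), {2, 4, 5}, {1, 4, 5}, {0, 4, 5}} ∨
      T.image (fun K => Kᶜ)
          = {({3, 4, 5} : Finset (Fin 6)), {2, 4, 5}, {2, 3, 5}, {2, 3, 4}}) := by
  intro T
  have hT : T ⊆ triplesInFirstFour ∨ T ⊆ triplesContainingFirstTwo := by
    simpa only [subset_iff, T, mem_filter, mem_univ, true_and, and_imp, IsHeavy] using
      isHeavy_subset_triplesInFirstFour_or_triplesContainingFirstTwo hsorted hpos hlt
  rcases hT with hT | hT
  · refine ⟨(card_le_card hT).trans (by decide), fun hcard => Or.inl ?_⟩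
    rw [eq_of_subset_of_card_le hT (by rw [hcard]; decide)]
    decide
  · refine ⟨(card_le_card hT).trans (by decide), fun hcard => Or.inr ?_⟩
    rw [eq_of_subset_of_card_le hT (by rw [hcard]; decide)]
    decide
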